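/- Let Σ be the set of sequences a = (a_n)_{n∈ℤ} with a_n ∈ P (a finite set embedded in a compact metric space M) satisfying d(f_n(a_n), a_{n+1}) < α for all n, endowed with the product topology. Suppose θ : Σ → M assigns to each a the unique point θ(a) with d(F_0^n(θ(a)), a_n) ≤ β for all n ∈ ℤ, where F is expansive with expansiveness constant δ > 4β. Then θ is continuous. -/

import Mathlib

/-!
The point `θ a` is characterised among all points of `M` by shadowing `a` within `β`: two points
shadowing the same sequence stay `2β < δ` apart along the whole orbit, so they coincide by
expansiveness. Hence the graph of `θ` is the set of pairs `(a, x)` with `d(F_0^n x, a_n) ≤ β` for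
all `n`, which is closed, and a map into a compact space with closed graph is continuous.
-/

open Set

theorem continuous_of_isClosed_graph_of_compactSpace {X Y : Type*} [TopologicalSpace X]
    [TopologicalSpace Y] [CompactSpace Y] {g : X → Y}
    (hg : IsClosed {p : X × Y | p.2 = g p.1}) : Continuous g := by
  refine continuous_iff_isClosed.2 fun C hC => ?_
  have hpre : g ⁻¹' C = Prod.fst '' ({p : X × Y | p.2 = g p.1} ∩ univ ×ˢ C) := by
    ext x
    constructor
    · exact fun hx => ⟨(x, g x), ⟨rfl, mem_univ x, hx⟩, rfl⟩
    · rintro ⟨⟨x, y⟩, ⟨hy, -, hC⟩, rfl⟩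
      obtain rfl : y = g x := hy
      exact hC
  rw [hpre]
  exact isClosedMap_fst_of_compactSpace _ (hg.inter (isClosed_univ.prod hC))

theorem continuous_of_comp_homeomorph_succ {M : Type*} [TopologicalSpace M] (f : ℤ → M ≃ₜ M)
    {F : ℤ → M → M} (hF0 : ∀ p, F 0 p = p) (hFs : ∀ n p, F (n + 1) p = f n (F n p)) (n : ℤ) :
    Continuous (F n) := by
  induction n using Int.induction_on with
  | zero => exact continuous_id.congr fun p => (hF0 p).symm
  | succ n ih => exact ((f n).continuous.comp ih).congr fun p => (hFs n p).symm
  | pred n ih =>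
    refine ((f (-n - 1)).symm.continuous.comp ih).congr fun p => ?_
    have hstep := hFs (-n - 1) p
    rw [sub_add_cancel] at hstep
    rw [Function.comp_apply, hstep, Homeomorph.symm_apply_apply]

section Expansive

variable {ι M : Type*} [MetricSpace M] {F : ι → M → M} {δ : ℝ}

theorem eq_of_forall_dist_lt_of_expansive
    (hexp : ∀ p q : M, p ≠ q → ∃ n, δ ≤ dist (F n p) (F n q)) {p q : M} (h : ∀ n, dist (F n p) (F n q) < δ) : p = q := by
  by_contra hpq
  obtain ⟨n, hn⟩ := hexp p q hpq
  exact (h n).not_ge hn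

theorem graph_eq_setOf_shadowing {X : Type*} {β : ℝ} (hβδ : 2 * β < δ)
    (hexp : ∀ p q : M, p ≠ q → ∃ n, δ ≤ dist (F n p) (F n q)) {c : X → ι → M} {θ : X → M}
    (hθ : ∀ a n, dist (F n (θ a)) (c a n) ≤ β) :
    {p : X × M | p.2 = θ p.1} = {p : X × M | ∀ n, dist (F n p.2) (c p.1 n) ≤ β} := by
  ext ⟨a, x⟩
  simp only [mem_ofPred_eq]
  refine ⟨by rintro rfl; exact hθ a, fun hx => eq_of_forall_dist_lt_of_expansive hexp fun n => ?_⟩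
  calc dist (F n x) (F n (θ a)) ≤ dist (F n x) (c a n) + dist (F n (θ a)) (c a n) :=
        dist_triangle_right _ _ _
    _ ≤ β + β := add_le_add (hx n) (hθ a n)
    _ < δ := by linarith

theorem continuous_of_shadowing_of_expansive [CompactSpace M] {X : Type*} [TopologicalSpace X]
    {β : ℝ} (hβδ : 2 * β < δ) (hF : ∀ n, Continuous (F n))
    (hexp : ∀ p q : M, p ≠ q → ∃ n, δ ≤ dist (F n p) (F n q)) {c : X → ι → M} (hc : Continuous c)
    {θ : X → M} (hθ : ∀ a n, dist (F n (θ a)) (c a n) ≤ β) : Continuous θ := by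
  refine continuous_of_isClosed_graph_of_compactSpace ?_
  rw [graph_eq_setOf_shadowing hβδ hexp hθ, ofPred_forall]
  exact isClosed_iInter fun n => isClosed_le
    (((hF n).comp continuous_snd).dist ((continuous_apply n).comp (hc.comp continuous_fst)))
    continuous_const

end Expansive

theorem stmt_9_general (M : Type*) [MetricSpace M] [CompactSpace M]
    (f : ℤ → (M ≃ₜ M))
    (F : ℤ → M → M)
    (hF0 : ∀ p, F 0 p = p)
    (hFs : ∀ (n : ℤ) (p : M), F (n + 1) p = f n (F n p))
    (P : Finset M) (α β δ : ℝ) (hβ : 0 < β) (hδ : 4 * β < δ)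
    (hexp : ∀ p q : M, p ≠ q → ∃ n : ℤ, δ ≤ dist (F n p) (F n q))
    (θ : {a : ℤ → M // (∀ n, a n ∈ P) ∧ ∀ n, dist (f n (a n)) (a (n + 1)) < α} → M)
    (hθ : ∀ a, ∀ n : ℤ, dist (F n (θ a)) (a.1 n) ≤ β) :
    Continuous θ :=
  continuous_of_shadowing_of_expansive (by linarith)
    (continuous_of_comp_homeomorph_succ f hF0 hFs) hexp continuous_subtype_val hθ

/-- continuity of the shadowing map `θ` on the space of pseudo-orbits. -/
theorem stmt_9 (M : Type*) [MetricSpace M] [CompactSpace M]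
    (f : ℤ → (M ≃ₜ M))
    (F : ℤ → M → M)
    (hF0 : ∀ p, F 0 p = p)
    (hFs : ∀ (n : ℤ) (p : M), F (n + 1) p = f n (F n p))
    (P : Finset M) (α β δ : ℝ) (hα : 0 < α) (hβ : 0 < β) (hδ : 4 * β < δ)
    (hexp : ∀ p q : M, p ≠ q → ∃ n : ℤ, δ ≤ dist (F n p) (F n q))
    (θ : {a : ℤ → M // (∀ n, a n ∈ P) ∧ ∀ n, dist (f n (a n)) (a (n + 1)) < α} → M)
    (hθ : ∀ a, ∀ n : ℤ, dist (F n (θ a)) (a.1 n) ≤ β) :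
    Continuous θ :=
  stmt_9_general M f F hF0 hFs P α β δ hβ hδ hexp θ hθ
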